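/- Let K be an infinitesimally symplectic 2n×2n matrix satisfying the hypotheses above (τ = (1/2)Tr K² ≠ 0, Kλ = 0 for an (n−1)-dimensional isotropic λ), let β ∈ ℝ^{2n} be a nonzero vector with both β and J·β skew-orthogonal to λ, and set η = K·β, θ = K·J·β. Then [η, θ] = τ·|β|², where |β|² is the Euclidean norm squared of β; in particular sign[η,θ] = sign τ, and η, θ are linearly independent and span im K². -/

import Mathlib

open scoped BigOperators
open Sum

noncomputable section

/-- Phase space `ℝ^{2n}`: index `inl i` is the `q_i` (position) coordinate,
`inr i` is the `p_i` (momentum) coordinate. -/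
abbrev PS (n : ℕ) := (Fin n ⊕ Fin n) → ℝ

/-- Standard symplectic inner product `[z₁,z₂] = q₁·p₂ − p₁·q₂`. -/
def symp {n : ℕ} (u v : PS n) : ℝ :=
  (∑ i, u (inl i) * v (inr i)) - ∑ i, u (inr i) * v (inl i)

/-- Gradient of a function on phase space. -/
def grad {n : ℕ} (F : PS n → ℝ) (z : PS n) : PS n :=
  fun i => fderiv ℝ F z (Pi.single i 1)

/-- Standard Poisson bracket `{F,G} = ∇F·J·∇G`. -/
def poisson {n : ℕ} (F G : PS n → ℝ) (z : PS n) : ℝ :=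
  symp (grad F z) (grad G z)

/-- Standard symplectic matrix `J = [[0,I],[−I,0]]`. -/
def Jmat (n : ℕ) : Matrix (Fin n ⊕ Fin n) (Fin n ⊕ Fin n) ℝ :=
  Matrix.fromBlocks 0 1 (-1) 0

/-- Hamiltonian vector field `ξ = J·∇F`. -/
def ham {n : ℕ} (F : PS n → ℝ) (z : PS n) : PS n :=
  (Jmat n).mulVec (grad F z)

/-- Hessian matrix of second partial derivatives. -/
def hess {n : ℕ} (F : PS n → ℝ) (z : PS n) :
    Matrix (Fin n ⊕ Fin n) (Fin n ⊕ Fin n) ℝ :=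
  fun i j => fderiv ℝ (fun w => fderiv ℝ F w (Pi.single j 1)) z (Pi.single i 1)

/-!
`K` kills the isotropic subspace `λ` and maps everything into its skew-orthogonal complement
`W = λ^⊥`, of dimension `n + 1`. Hence `K` induces a trace-free endomorphism of the plane
`W ⧸ λ`, whose square is `τ` by Cayley–Hamilton: `K² w ≡ τ w (mod λ)` for `w ∈ W`. As `β` is
skew-orthogonal to `λ`, this gives `[Kβ, KJβ] = -[β, K²Jβ] = -τ [β, Jβ] = τ |β|²`. This bracket
is nonzero, so `Kβ, KJβ` are independent; they lie in `im K²` because `K³ w = τ K w` on `W`, and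
`im K²` has dimension at most `2` because `K` restricted to `W` factors through `W ⧸ λ`.
-/

open Module LinearMap

section

variable {k V : Type*} [Field k] [AddCommGroup V] [Module k V]

theorem Submodule.trace_mkQ_comp_liftQ [FiniteDimensional k V] (L : Submodule k V)
    (f : V →ₗ[k] V) (hL : L ≤ ker f) :
    trace k (V ⧸ L) (L.mkQ ∘ₗ L.liftQ f hL) = trace k V f := by
  rw [← trace_comp_comm', L.liftQ_mkQ]

theorem LinearMap.finrank_range_comp_self_le_two [FiniteDimensional k V] (f : V →ₗ[k] V)
    {L W : Submodule k V} (hLker : L ≤ ker f) (hLW : L ≤ W) (hfW : ∀ x, f x ∈ W)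
    (hdim : finrank k W = finrank k L + 2) : finrank k (range (f ∘ₗ f)) ≤ 2 := by
  have hker : finrank k L ≤ finrank k (ker (f.domRestrict W)) := by
    rw [← (Submodule.comapSubtypeEquivOfLe hLW).finrank_eq]
    exact Submodule.finrank_mono fun x hx => hLker hx
  have hrange : finrank k (range (f ∘ₗ f)) ≤ finrank k (range (f.domRestrict W)) := by
    rw [range_comp, range_domRestrict]
    exact Submodule.finrank_mono (Submodule.map_mono fun _ ⟨x, hx⟩ => hx ▸ hfW x)
  have := finrank_range_add_finrank_ker (f.domRestrict W)
  omega

theorem LinearMap.apply_mem_range_comp_self (f : V →ₗ[k] V) {L : Submodule k V}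
    (hLker : L ≤ ker f) {c : k} (hc : c ≠ 0) {w : V} (hw : f (f w) - c • w ∈ L) :
    f w ∈ range (f ∘ₗ f) := by
  refine ⟨c⁻¹ • f w, ?_⟩
  have h : f (f (f w)) = c • f w := by
    rw [← sub_eq_zero, ← map_smul, ← map_sub]
    exact hLker hw
  rw [comp_apply, map_smul, map_smul, h, smul_smul, inv_mul_cancel₀ hc, one_smul]

theorem LinearIndependent.span_pair_eq_of_finrank_le [FiniteDimensional k V] {x y : V}
    (hxy : LinearIndependent k ![x, y]) {U : Submodule k V} (hx : x ∈ U) (hy : y ∈ U)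
    (hU : finrank k U ≤ 2) : Submodule.span k {x, y} = U := by
  refine Submodule.eq_of_le_of_finrank_le ?_ ?_
  · rw [Submodule.span_le]
    rintro _ (rfl | rfl)
    exacts [hx, hy]
  · have h := finrank_span_eq_card hxy
    rw [Matrix.range_cons_cons_empty] at h
    rw [h, Fintype.card_fin]
    exact hU

theorem LinearMap.BilinForm.IsAlt.linearIndependent_pair {B : LinearMap.BilinForm k V}
    (hB : B.IsAlt) {x y : V} (h : B x y ≠ 0) : LinearIndependent k ![x, y] := by
  rw [LinearIndependent.pair_iff]
  intro s t hst
  have hs : s * B x y = 0 := by simpa [hB.self_eq_zero y] using congrArg (B · y) hst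
  have ht : t * B x y = 0 := by simpa [hB.self_eq_zero x] using congrArg (B x) hst
  exact ⟨(mul_eq_zero.mp hs).resolve_right h, (mul_eq_zero.mp ht).resolve_right h⟩

variable [NeZero (2 : k)]

theorem Matrix.mul_self_eq_smul_one_of_trace_eq_zero (M : Matrix (Fin 2) (Fin 2) k)
    (h : M.trace = 0) : M * M = ((M * M).trace / 2) • 1 := by
  have hd : M 1 1 = -M 0 0 := by rw [Matrix.trace_fin_two] at h; linear_combination h
  ext i j
  fin_cases i <;> fin_cases j <;>
    simp [Matrix.mul_apply, Fin.sum_univ_two, Matrix.trace_fin_two, hd] <;>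
    field_simp <;> ring

theorem LinearMap.comp_self_eq_smul_id_of_finrank_eq_two [FiniteDimensional k V]
    (hV : finrank k V = 2) (A : V →ₗ[k] V) (hA : trace k V A = 0) :
    A ∘ₗ A = (trace k V (A ∘ₗ A) / 2) • id := by
  let b := Module.finBasisOfFinrankEq k V hV
  apply (toMatrix b b).injective
  rw [toMatrix_comp b b b, map_smul, toMatrix_id, trace_eq_matrix_trace k b, toMatrix_comp b b b]
  exact Matrix.mul_self_eq_smul_one_of_trace_eq_zero _ (by rwa [← trace_eq_matrix_trace k b])

theorem LinearMap.apply_apply_eq_half_trace_smul [FiniteDimensional k V] (A : V →ₗ[k] V)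
    {U : Submodule k V} (hU : finrank k U = 2) (hA : ∀ x, A x ∈ U) (htr : trace k V A = 0)
    {u : V} (hu : u ∈ U) : A (A u) = (trace k V (A ∘ₗ A) / 2) • u := by
  have hAA : ∀ x, (A ∘ₗ A) x ∈ U := fun x => hA _
  set A' := A.restrict (p := U) (q := U) fun x _ => hA x
  have hres : (A ∘ₗ A).restrict (p := U) (q := U) (fun x _ => hAA x) = A' ∘ₗ A' := by
    ext; rfl
  have h := comp_self_eq_smul_id_of_finrank_eq_two hU A'
    (by rw [trace_restrict_eq_of_forall_mem U A hA, htr])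
  rw [← hres, trace_restrict_eq_of_forall_mem U (A ∘ₗ A) hAA, hres] at h
  exact congrArg Subtype.val (LinearMap.congr_fun h ⟨u, hu⟩)

theorem LinearMap.apply_apply_sub_half_trace_smul_mem [FiniteDimensional k V] (f : V →ₗ[k] V)
    {L W : Submodule k V} (hLker : L ≤ ker f) (hLW : L ≤ W) (hfW : ∀ x, f x ∈ W)
    (hdim : finrank k W = finrank k L + 2) (htr : trace k V f = 0) {w : V} (hw : w ∈ W) :
    f (f w) - (trace k V (f ∘ₗ f) / 2) • w ∈ L := by
  have hLker2 : L ≤ ker (f ∘ₗ f) := fun x hx => by simp [mem_ker.mp (hLker hx)]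
  set A := L.mkQ ∘ₗ L.liftQ f hLker
  have hAA : A ∘ₗ A = L.mkQ ∘ₗ L.liftQ (f ∘ₗ f) hLker2 := by
    ext; rfl
  have hWq : finrank k (W.map L.mkQ) = 2 := by
    have h := finrank_range_add_finrank_ker (L.mkQ.domRestrict W)
    rw [range_domRestrict, ker_domRestrict, Submodule.ker_mkQ,
      (Submodule.comapSubtypeEquivOfLe hLW).finrank_eq] at h
    omega
  have hA : ∀ q, A q ∈ W.map L.mkQ := by
    intro q
    obtain ⟨x, rfl⟩ := L.mkQ_surjective q
    exact Submodule.mem_map_of_mem (hfW x)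
  have h := A.apply_apply_eq_half_trace_smul hWq hA
    (by rw [L.trace_mkQ_comp_liftQ, htr]) (Submodule.mem_map_of_mem hw)
  rw [hAA, L.trace_mkQ_comp_liftQ] at h
  rw [← Submodule.ker_mkQ L, mem_ker, map_sub, map_smul, sub_eq_zero]
  exact h

end

theorem Real.sign_mul_of_pos (a : ℝ) {b : ℝ} (hb : 0 < b) :
    Real.sign (a * b) = Real.sign a := by
  rcases lt_trichotomy a 0 with ha | rfl | ha
  · rw [sign_of_neg ha, sign_of_neg (mul_neg_of_neg_of_pos ha hb)]
  · rw [zero_mul]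
  · rw [sign_of_pos ha, sign_of_pos (mul_pos ha hb)]

open Matrix

theorem Matrix.trace_mulVecLin {ι : Type*} [Fintype ι] [DecidableEq ι] (M : Matrix ι ι ℝ) :
    LinearMap.trace ℝ (ι → ℝ) M.mulVecLin = M.trace := by
  rw [← toLin'_apply', trace_toLin'_eq]

theorem Jmat_mul_self (n : ℕ) : Jmat n * Jmat n = -1 := by
  rw [Jmat, fromBlocks_multiply, ← fromBlocks_one, fromBlocks_neg]
  simp

def sympForm (n : ℕ) : LinearMap.BilinForm ℝ (PS n) := (Jmat n).toBilin'

theorem sympForm_nondegenerate (n : ℕ) : (sympForm n).Nondegenerate :=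
  BilinForm.nondegenerate_toBilin'_of_det_ne_zero' _
    (isUnit_det_of_left_inverse (B := -Jmat n) (by rw [neg_mul, Jmat_mul_self, neg_neg])).ne_zero

section

variable {n : ℕ} {K : Matrix (Fin n ⊕ Fin n) (Fin n ⊕ Fin n) ℝ} {lam : Submodule ℝ (PS n)}

theorem symp_eq_dotProduct (u v : PS n) : symp u v = u ⬝ᵥ Jmat n *ᵥ v := by
  simp [symp, Jmat, dotProduct, mulVec, Fintype.sum_sum_type, sub_eq_add_neg, one_apply]

theorem sympForm_apply (u v : PS n) : sympForm n u v = symp u v := by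
  rw [sympForm, toBilin'_apply', symp_eq_dotProduct]

theorem symp_self (u : PS n) : symp u u = 0 := by
  simp only [symp, mul_comm, sub_self]

theorem sympForm_isAlt : (sympForm n).IsAlt := fun u => by
  rw [sympForm_apply, symp_self]

theorem symp_swap (u v : PS n) : symp v u = -symp u v := by
  simp only [← sympForm_apply]
  exact (sympForm_isAlt.neg_eq u v).symm

theorem symp_mulVec_Jmat_self (β : PS n) : symp β (Jmat n *ᵥ β) = -∑ i, β i ^ 2 := by
  rw [symp_eq_dotProduct, mulVec_mulVec, Jmat_mul_self, neg_mulVec, one_mulVec, dotProduct_neg]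
  simp [dotProduct, sq]

theorem mem_sympForm_orthogonal {u : PS n} :
    u ∈ (sympForm n).orthogonal lam ↔ ∀ v ∈ lam, symp u v = 0 := by
  simp only [BilinForm.mem_orthogonal_iff, sympForm_apply, symp_swap _ u, neg_eq_zero]

theorem le_sympForm_orthogonal (hiso : ∀ u ∈ lam, ∀ v ∈ lam, symp u v = 0) :
    lam ≤ (sympForm n).orthogonal lam :=
  fun u hu => mem_sympForm_orthogonal.2 (hiso u hu)

theorem finrank_sympForm_orthogonal (lam : Submodule ℝ (PS n)) :
    finrank ℝ ((sympForm n).orthogonal lam) + finrank ℝ lam = 2 * n := by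
  have := lam.finrank_le
  rw [BilinForm.finrank_orthogonal (sympForm_nondegenerate n)]
  simp only [finrank_pi, Fintype.card_sum, Fintype.card_fin] at this ⊢
  omega

theorem finrank_sympForm_orthogonal_eq (hn : n ≠ 0) (hlamdim : finrank ℝ lam = n - 1) :
    finrank ℝ ((sympForm n).orthogonal lam) = finrank ℝ lam + 2 := by
  have := finrank_sympForm_orthogonal lam
  omega

theorem trace_eq_zero_of_symp_mulVec
    (hK : ∀ u v : PS n, symp (K *ᵥ u) v + symp u (K *ᵥ v) = 0) : K.trace = 0 := by
  have hJK : Kᵀ * Jmat n + Jmat n * K = 0 := by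
    have h : ∀ u v, u ⬝ᵥ (Kᵀ * Jmat n + Jmat n * K) *ᵥ v = 0 := fun u v => by
      rw [add_mulVec, dotProduct_add, ← mulVec_mulVec, ← mulVec_mulVec,
        dotProduct_mulVec u Kᵀ, vecMul_transpose, ← symp_eq_dotProduct, ← symp_eq_dotProduct]
      exact hK u v
    ext i j
    simpa using h (Pi.single i 1) (Pi.single j 1)
  have h : -K.trace = K.trace := calc
    -K.trace = (Jmat n * (Jmat n * K)).trace := by
      rw [← Matrix.mul_assoc, Jmat_mul_self, neg_one_mul, trace_neg]
    _ = -(Jmat n * (Kᵀ * Jmat n)).trace := by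
      rw [eq_neg_of_add_eq_zero_right hJK, Matrix.mul_neg, trace_neg]
    _ = -(Kᵀ * (Jmat n * Jmat n)).trace := by rw [Matrix.trace_mul_comm, Matrix.mul_assoc]
    _ = K.trace := by
      rw [Jmat_mul_self, Matrix.mul_neg, Matrix.mul_one, trace_neg, neg_neg, Matrix.trace_transpose]
  linarith

theorem mulVec_mem_sympForm_orthogonal
    (hK : ∀ u v : PS n, symp (K *ᵥ u) v + symp u (K *ᵥ v) = 0)
    (hKlam : ∀ v ∈ lam, K *ᵥ v = 0) (x : PS n) : K *ᵥ x ∈ (sympForm n).orthogonal lam :=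
  mem_sympForm_orthogonal.2 fun v hv => by
    rw [eq_neg_of_add_eq_zero_left (hK x v), hKlam v hv, ← sympForm_apply, map_zero, neg_zero]

theorem mulVec_mulVec_sub_half_trace_smul_mem (hn : n ≠ 0)
    (hK : ∀ u v : PS n, symp (K *ᵥ u) v + symp u (K *ᵥ v) = 0)
    (hlamdim : finrank ℝ lam = n - 1) (hiso : ∀ u ∈ lam, ∀ v ∈ lam, symp u v = 0)
    (hKlam : ∀ v ∈ lam, K *ᵥ v = 0) {w : PS n} (hw : ∀ v ∈ lam, symp w v = 0) :
    K *ᵥ (K *ᵥ w) - ((1 / 2 : ℝ) * (K * K).trace) • w ∈ lam := by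
  have h := K.mulVecLin.apply_apply_sub_half_trace_smul_mem hKlam (le_sympForm_orthogonal hiso)
    (mulVec_mem_sympForm_orthogonal hK hKlam) (finrank_sympForm_orthogonal_eq hn hlamdim)
    (by rw [trace_mulVecLin, trace_eq_zero_of_symp_mulVec hK]) (mem_sympForm_orthogonal.2 hw)
  rwa [← mulVecLin_mul, trace_mulVecLin, div_eq_inv_mul, ← one_div] at h

theorem finrank_range_mul_self_le (hn : n ≠ 0)
    (hK : ∀ u v : PS n, symp (K *ᵥ u) v + symp u (K *ᵥ v) = 0)
    (hlamdim : finrank ℝ lam = n - 1) (hiso : ∀ u ∈ lam, ∀ v ∈ lam, symp u v = 0)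
    (hKlam : ∀ v ∈ lam, K *ᵥ v = 0) : finrank ℝ (range (K * K).mulVecLin) ≤ 2 := by
  rw [mulVecLin_mul]
  exact K.mulVecLin.finrank_range_comp_self_le_two hKlam (le_sympForm_orthogonal hiso)
    (mulVec_mem_sympForm_orthogonal hK hKlam) (finrank_sympForm_orthogonal_eq hn hlamdim)

theorem symp_mulVec_mulVec_Jmat (hK : ∀ u v : PS n, symp (K *ᵥ u) v + symp u (K *ᵥ v) = 0)
    {β : PS n} (hβlam : ∀ v ∈ lam, symp β v = 0) {c : ℝ}
    (hc : K *ᵥ (K *ᵥ (Jmat n *ᵥ β)) - c • Jmat n *ᵥ β ∈ lam) :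
    symp (K *ᵥ β) (K *ᵥ (Jmat n *ᵥ β)) = c * ∑ i, β i ^ 2 := by
  have h : symp β (K *ᵥ (K *ᵥ (Jmat n *ᵥ β))) = symp β (c • Jmat n *ᵥ β) := by
    rw [← sub_eq_zero, ← sympForm_apply, ← sympForm_apply, ← map_sub, sympForm_apply]
    exact hβlam _ hc
  calc symp (K *ᵥ β) (K *ᵥ (Jmat n *ᵥ β)) = -symp β (K *ᵥ (K *ᵥ (Jmat n *ᵥ β))) :=
        eq_neg_of_add_eq_zero_left (hK _ _)
    _ = c * ∑ i, β i ^ 2 := by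
      rw [h, ← sympForm_apply, map_smul, sympForm_apply, symp_mulVec_Jmat_self, smul_eq_mul]
      ring

end

/-- under the hypotheses of Proposition 3, with `β` and `J·β`
skew-orthogonal to `λ` and `η = K·β`, `θ = K·J·β`, one has `[η,θ] = τ·|β|²`;
in particular `sign [η,θ] = sign τ`, and `η, θ` are linearly independent and
span `im K²`. -/
theorem stmt11 {n : ℕ} (K : Matrix (Fin n ⊕ Fin n) (Fin n ⊕ Fin n) ℝ)
    (hK : ∀ u v : PS n, symp (K.mulVec u) v + symp u (K.mulVec v) = 0)
    (hτ : (1 / 2 : ℝ) * (K * K).trace ≠ 0)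
    (lam : Submodule ℝ (PS n))
    (hlamdim : Module.finrank ℝ lam = n - 1)
    (hiso : ∀ u ∈ lam, ∀ v ∈ lam, symp u v = 0)
    (hKlam : ∀ v ∈ lam, K.mulVec v = 0)
    (β : PS n) (hβ : β ≠ 0)
    (hβlam : ∀ v ∈ lam, symp β v = 0)
    (hJβlam : ∀ v ∈ lam, symp ((Jmat n).mulVec β) v = 0) :
    symp (K.mulVec β) (K.mulVec ((Jmat n).mulVec β)) =
      ((1 / 2 : ℝ) * (K * K).trace) * (∑ i, β i ^ 2) ∧
    Real.sign (symp (K.mulVec β) (K.mulVec ((Jmat n).mulVec β))) =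
      Real.sign ((1 / 2 : ℝ) * (K * K).trace) ∧
    LinearIndependent ℝ ![K.mulVec β, K.mulVec ((Jmat n).mulVec β)] ∧
    Submodule.span ℝ {K.mulVec β, K.mulVec ((Jmat n).mulVec β)} =
      LinearMap.range (K * K).mulVecLin := by
  have hn : n ≠ 0 := by
    rintro rfl
    exact hβ (Subsingleton.elim _ _)
  have hsq := fun w (hw : ∀ v ∈ lam, symp w v = 0) =>
    mulVec_mulVec_sub_half_trace_smul_mem hn hK hlamdim hiso hKlam hw
  have hbracket := symp_mulVec_mulVec_Jmat hK hβlam (hsq _ hJβlam)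
  have hnorm : 0 < ∑ i, β i ^ 2 := by
    obtain ⟨i, hi⟩ := Function.ne_iff.mp hβ
    exact Finset.sum_pos' (fun j _ => sq_nonneg _)
      ⟨i, Finset.mem_univ i, pow_two_pos_of_ne_zero hi⟩
  have hli := LinearMap.BilinForm.IsAlt.linearIndependent_pair sympForm_isAlt
    (by rw [sympForm_apply, hbracket]; exact mul_ne_zero hτ hnorm.ne')
  refine ⟨hbracket, by rw [hbracket, Real.sign_mul_of_pos _ hnorm], hli,
    hli.span_pair_eq_of_finrank_le ?_ ?_ (finrank_range_mul_self_le hn hK hlamdim hiso hKlam)⟩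
  all_goals rw [mulVecLin_mul]
  · exact K.mulVecLin.apply_mem_range_comp_self hKlam hτ (hsq β hβlam)
  · exact K.mulVecLin.apply_mem_range_comp_self hKlam hτ (hsq _ hJβlam)
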